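/- arXiv:2112.03224 — 10 statements merged into one kernel-verified Lean document; each statement's English description precedes it below -/
import Mathlib

section
/- Let (G, G⁺) be a torsion-free partially ordered abelian group and let H₀ ≤ G be a maximally singular subgroup. Then H₀ satisfies property (2.2): for every integer k ≥ 1 and every x ∈ G, if k·x ∈ H₀ then x ∈ H₀. -/
/-! For `k ≥ 1` the subgroup `{a | k • a ∈ H₀}` contains `H₀`, and it is still singular,
because a positive `a` in it has the positive multiple `k • a` in `H₀`, so `k • a = 0` and
`a = 0` by torsion-freeness. Maximality forces it to be `H₀`. -/

section

variable {G : Type*} [AddCommGroup G]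

def AddSubgroup.IsSingular (P : Set G) (H : AddSubgroup G) : Prop :=
  ∀ a ∈ H, a ∈ P → a = 0

theorem AddSubgroup.le_comap_nsmul (H : AddSubgroup G) (k : ℕ) :
    H ≤ H.comap (nsmulAddMonoidHom k) :=
  fun _ ha => H.nsmul_mem ha k

theorem AddSubgroup.IsSingular.comap_nsmul {P : AddSubmonoid G} {H : AddSubgroup G}
    (hH : H.IsSingular P) {k : ℕ} (htf : ∀ x : G, k • x = 0 → x = 0) :
    (H.comap (nsmulAddMonoidHom k)).IsSingular P :=
  fun a haH haP => htf a (hH _ haH (P.nsmul_mem haP k))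

end

theorem stmt_0_general {G : Type*} [AddCommGroup G]
    (Gpos : Set G)
    (hzero : (0 : G) ∈ Gpos)
    (hadd : ∀ a ∈ Gpos, ∀ b ∈ Gpos, a + b ∈ Gpos)
    (htf : ∀ n : ℕ, 1 ≤ n → ∀ x : G, n • x = 0 → x = 0)
    (H₀ : AddSubgroup G)
    (hsing : ∀ a ∈ H₀, a ∈ Gpos → a = 0)
    (hmax : ∀ H : AddSubgroup G, (∀ a ∈ H, a ∈ Gpos → a = 0) → H₀ ≤ H → H = H₀) :
    ∀ k : ℤ, 1 ≤ k → ∀ x : G, k • x ∈ H₀ → x ∈ H₀ := by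
  intro k hk x hkx
  lift k to ℕ using (by omega)
  let P : AddSubmonoid G :=
    { carrier := Gpos, add_mem' := fun ha hb => hadd _ ha _ hb, zero_mem' := hzero }
  have hsat : H₀.comap (nsmulAddMonoidHom k) = H₀ :=
    hmax _ (AddSubgroup.IsSingular.comap_nsmul (P := P) hsing (htf k (by omega)))
      (H₀.le_comap_nsmul k)
  rw [← hsat]
  simpa using hkx

/-- Let (G, G⁺) be a torsion-free partially ordered abelian group and let
H₀ ≤ G be a maximally singular subgroup. Then H₀ satisfies property (2.2): for every
integer k ≥ 1 and every x ∈ G, if k·x ∈ H₀ then x ∈ H₀. -/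
theorem stmt_0 {G : Type*} [AddCommGroup G]
    (Gpos : Set G)
    (hzero : (0 : G) ∈ Gpos)
    (hadd : ∀ a ∈ Gpos, ∀ b ∈ Gpos, a + b ∈ Gpos)
    (hpointed : ∀ a : G, a ∈ Gpos → -a ∈ Gpos → a = 0)
    (htf : ∀ n : ℕ, 1 ≤ n → ∀ x : G, n • x = 0 → x = 0)
    (H₀ : AddSubgroup G)
    (hsing : ∀ a ∈ H₀, a ∈ Gpos → a = 0)
    (hmax : ∀ H : AddSubgroup G, (∀ a ∈ H, a ∈ Gpos → a = 0) → H₀ ≤ H → H = H₀) :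
    ∀ k : ℤ, 1 ≤ k → ∀ x : G, k • x ∈ H₀ → x ∈ H₀ :=
  stmt_0_general Gpos hzero hadd htf H₀ hsing hmax
end

section
/- Let (G, G⁺, u) be a partially ordered abelian group with order unit u such that G ≅ G ⊗ ℚ, and let H ≤ G be a singular subgroup satisfying property (2.2). On G₀ = G/H define the quotient cone G₀⁺ = {x + H : ∃ y ∈ H with x + y ∈ G⁺}. Then: G₀⁺ + G₀⁺ ⊆ G₀⁺ and G₀⁺ ∩ (−G₀⁺) = {0}, so (G₀, G₀⁺) is a partially ordered abelian group; u + H is an order unit of (G₀, G₀⁺); the quotient map π : G → G₀ is positive (π(G⁺) ⊆ G₀⁺); and (G₀, G₀⁺) is unperforated: if n ≥ 1 and n·(x + H) ∈ G₀⁺ then x + H ∈ G₀⁺. -/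
/-! The quotient cone is just the image `π(G⁺)` of the positive cone, because adding an element
of `H` does not change the coset. Pointedness then follows from singularity: if `π x = -π x'`
with `x, x' ∈ G⁺`, then `x + x' ∈ H ∩ G⁺ = 0`. Unperforation uses divisibility: if
`π z = n • π x` with `z ∈ G⁺`, then `z/n ∈ G⁺`, and `z/n - x ∈ H` by (2.2) since
`n • (z/n - x) = z - n • x ∈ H`. -/

namespace QuotientAddGroup

variable {G : Type*} [AddCommGroup G] {P : Set G} {H : AddSubgroup G}

theorem setOf_exists_add_mem_eq_image :
    {ξ : G ⧸ H | ∃ x : G, QuotientAddGroup.mk x = ξ ∧ ∃ y ∈ H, x + y ∈ P} =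
      (mk : G → G ⧸ H) '' P := by
  ext ξ
  constructor
  · rintro ⟨x, rfl, y, hy, hxy⟩
    exact ⟨x + y, hxy, by rw [mk_add, (eq_zero_iff y).2 hy, add_zero]⟩
  · rintro ⟨x, hx, rfl⟩
    exact ⟨x, rfl, 0, H.zero_mem, by rwa [add_zero]⟩

theorem add_mem_image_mk (hadd : ∀ a ∈ P, ∀ b ∈ P, a + b ∈ P) :
    ∀ ξ ∈ (mk : G → G ⧸ H) '' P, ∀ η ∈ (mk : G → G ⧸ H) '' P, ξ + η ∈ (mk : G → G ⧸ H) '' P := by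
  rintro _ ⟨x, hx, rfl⟩ _ ⟨y, hy, rfl⟩
  exact ⟨x + y, hadd x hx y hy, mk_add _ x y⟩

theorem eq_zero_of_mem_image_mk_of_neg_mem (hadd : ∀ a ∈ P, ∀ b ∈ P, a + b ∈ P)
    (hpointed : ∀ a : G, a ∈ P → -a ∈ P → a = 0) (hsing : ∀ a ∈ H, a ∈ P → a = 0)
    {ξ : G ⧸ H} (hξ : ξ ∈ (mk : G → G ⧸ H) '' P) (hnξ : -ξ ∈ (mk : G → G ⧸ H) '' P) :
    ξ = 0 := by
  obtain ⟨x, hx, rfl⟩ := hξ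
  obtain ⟨x', hx', hx'_eq⟩ := hnξ
  have hsum_mem : x + x' ∈ H := by
    rw [← eq_zero_iff, mk_add, hx'_eq, add_neg_cancel]
  have hsum : x + x' = 0 := hsing _ hsum_mem (hadd x hx x' hx')
  have hx0 : x = 0 := hpointed x hx (by rwa [neg_eq_of_add_eq_zero_right hsum])
  rw [hx0, mk_zero]

theorem exists_nsmul_sub_mem_image_mk {u : G} (hunit : ∀ x : G, ∃ n : ℕ, n • u - x ∈ P)
    (ξ : G ⧸ H) : ∃ n : ℕ, n • (mk u : G ⧸ H) - ξ ∈ (mk : G → G ⧸ H) '' P := by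
  induction ξ using QuotientAddGroup.induction_on with
  | H x =>
    obtain ⟨n, hn⟩ := hunit x
    exact ⟨n, n • u - x, hn, by rw [mk_sub, mk_nsmul]⟩

theorem mem_image_mk_of_nsmul_mem [Module ℚ G] (hsmul : ∀ q : ℚ, 0 ≤ q → ∀ a ∈ P, q • a ∈ P)
    (hdiv : ∀ n : ℕ, n ≠ 0 → ∀ x : G, n • x ∈ H → x ∈ H) {n : ℕ} (hn : n ≠ 0) {ξ : G ⧸ H}
    (h : n • ξ ∈ (mk : G → G ⧸ H) '' P) : ξ ∈ (mk : G → G ⧸ H) '' P := by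
  induction ξ using QuotientAddGroup.induction_on with
  | H x =>
    obtain ⟨z, hz, hzx⟩ := h
    refine ⟨(n : ℚ)⁻¹ • z, hsmul _ (by positivity) z hz, ?_⟩
    have hz_sub : -z + n • x ∈ H := by
      rw [← QuotientAddGroup.eq, mk_nsmul, hzx]
    have hn_inv : n • ((n : ℚ)⁻¹ • z) = z := by
      rw [← Nat.cast_smul_eq_nsmul ℚ, smul_inv_smul₀ (Nat.cast_ne_zero.2 hn)]
    rw [QuotientAddGroup.eq]
    exact hdiv n hn _ (by rwa [smul_add, smul_neg, hn_inv])

end QuotientAddGroup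

open QuotientAddGroup in
theorem stmt_2_general {G : Type*} [AddCommGroup G] [Module ℚ G]
    (Gpos : Set G)
    (hadd : ∀ a ∈ Gpos, ∀ b ∈ Gpos, a + b ∈ Gpos)
    (hpointed : ∀ a : G, a ∈ Gpos → -a ∈ Gpos → a = 0)
    (hsmul : ∀ q : ℚ, 0 ≤ q → ∀ a ∈ Gpos, q • a ∈ Gpos)
    (u : G) (hu : u ∈ Gpos)
    (hunit : ∀ x : G, ∃ n : ℕ, n • u - x ∈ Gpos)
    (H : AddSubgroup G)
    (hsing : ∀ a ∈ H, a ∈ Gpos → a = 0)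
    (h22 : ∀ k : ℤ, 1 ≤ k → ∀ x : G, k • x ∈ H → x ∈ H)
    (Q : Set (G ⧸ H))
    (hQ : Q = {ξ : G ⧸ H | ∃ x : G, QuotientAddGroup.mk x = ξ ∧ ∃ y ∈ H, x + y ∈ Gpos}) :
    (∀ a ∈ Q, ∀ b ∈ Q, a + b ∈ Q) ∧
    (∀ a : G ⧸ H, a ∈ Q → -a ∈ Q → a = 0) ∧
    ((QuotientAddGroup.mk u : G ⧸ H) ∈ Q ∧
      ∀ ξ : G ⧸ H, ∃ n : ℕ, n • (QuotientAddGroup.mk u : G ⧸ H) - ξ ∈ Q) ∧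
    (∀ x ∈ Gpos, (QuotientAddGroup.mk x : G ⧸ H) ∈ Q) ∧
    (∀ n : ℕ, 1 ≤ n → ∀ ξ : G ⧸ H, n • ξ ∈ Q → ξ ∈ Q) := by
  have hdiv : ∀ n : ℕ, n ≠ 0 → ∀ x : G, n • x ∈ H → x ∈ H := fun n hn x hx =>
    h22 n (by omega) x (by rwa [natCast_zsmul])
  subst hQ
  rw [setOf_exists_add_mem_eq_image]
  exact ⟨add_mem_image_mk hadd,
    fun _ => eq_zero_of_mem_image_mk_of_neg_mem hadd hpointed hsing,
    ⟨Set.mem_image_of_mem _ hu, exists_nsmul_sub_mem_image_mk hunit⟩,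
    fun _ hx => Set.mem_image_of_mem _ hx,
    fun _ hn _ => mem_image_mk_of_nsmul_mem hsmul hdiv (by omega)⟩

/-- quotient of a ℚ-ordered group with order unit by a singular subgroup
satisfying (2.2), with the quotient cone, is a partially ordered abelian group with
order unit u + H, the quotient map is positive, and the quotient is unperforated. -/
theorem stmt_2 {G : Type*} [AddCommGroup G] [Module ℚ G]
    (Gpos : Set G)
    (hzero : (0 : G) ∈ Gpos)
    (hadd : ∀ a ∈ Gpos, ∀ b ∈ Gpos, a + b ∈ Gpos)
    (hpointed : ∀ a : G, a ∈ Gpos → -a ∈ Gpos → a = 0)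
    (hsmul : ∀ q : ℚ, 0 ≤ q → ∀ a ∈ Gpos, q • a ∈ Gpos)
    (u : G) (hu : u ∈ Gpos)
    (hunit : ∀ x : G, ∃ n : ℕ, n • u - x ∈ Gpos)
    (H : AddSubgroup G)
    (hsing : ∀ a ∈ H, a ∈ Gpos → a = 0)
    (h22 : ∀ k : ℤ, 1 ≤ k → ∀ x : G, k • x ∈ H → x ∈ H)
    (Q : Set (G ⧸ H))
    (hQ : Q = {ξ : G ⧸ H | ∃ x : G, QuotientAddGroup.mk x = ξ ∧ ∃ y ∈ H, x + y ∈ Gpos}) :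
    (∀ a ∈ Q, ∀ b ∈ Q, a + b ∈ Q) ∧
    (∀ a : G ⧸ H, a ∈ Q → -a ∈ Q → a = 0) ∧
    ((QuotientAddGroup.mk u : G ⧸ H) ∈ Q ∧
      ∀ ξ : G ⧸ H, ∃ n : ℕ, n • (QuotientAddGroup.mk u : G ⧸ H) - ξ ∈ Q) ∧
    (∀ x ∈ Gpos, (QuotientAddGroup.mk x : G ⧸ H) ∈ Q) ∧
    (∀ n : ℕ, 1 ≤ n → ∀ ξ : G ⧸ H, n • ξ ∈ Q → ξ ∈ Q) :=
  stmt_2_general Gpos hadd hpointed hsmul u hu hunit H hsing h22 Q hQ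
end

section
/- Let (G, G⁺, u) be a partially ordered abelian group with order unit u, let ⪰ be a translation-invariant total order on G, and let τ be a faithful state of (G, G⁺, u). Define P = {a ∈ G : τ(a) > 0} ∪ {a ∈ G : τ(a) = 0 and a ⪰ 0}. Then P + P ⊆ P, P ∩ (−P) = {0}, P ∪ (−P) = G, G⁺ ⊆ P and u is an order unit of (G, P). In particular (G, P, u) is a totally ordered abelian group with order unit, and the identity map of G is positive from (G, G⁺) to (G, P). -/
/-!
The new cone orders `G` first by the state `τ` and then, on the kernel of `τ`, by the given
total order: it is the lexicographic product of the two. Addition respects both components,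
so the cone is closed under sums; totality and antisymmetry come from those of `ℝ` on the first
component and of the total order on the second. Faithfulness puts every nonzero positive
element in the first component, so the old cone, and with it every witness of the order unit,
lies in the new one.
-/

section LexCone

variable {G R : Type*} [AddCommGroup G] [AddCommGroup R] [LinearOrder R]
  (τ : G →+ R) {le : G → G → Prop}

variable (le) in
def lexCone : Set G := {a : G | 0 < τ a ∨ (τ a = 0 ∧ le 0 a)}

theorem subset_lexCone [Std.Refl le] {S : Set G} (hS : ∀ a ∈ S, a ≠ 0 → 0 < τ a) :
    S ⊆ lexCone τ le := by
  intro a ha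
  rcases eq_or_ne a 0 with rfl | ha0
  · exact Or.inr ⟨map_zero τ, refl 0⟩
  · exact Or.inl (hS a ha ha0)

variable [IsOrderedAddMonoid R] (hinv : ∀ x y z : G, le x y → le (x + z) (y + z))
include hinv

theorem lexCone_add_mem [IsTrans G le] {a b : G} (ha : a ∈ lexCone τ le)
    (hb : b ∈ lexCone τ le) : a + b ∈ lexCone τ le := by
  rcases ha with ha | ⟨ha0, ha⟩ <;> rcases hb with hb | ⟨hb0, hb⟩
  · exact Or.inl (by rw [map_add]; exact add_pos ha hb)
  · exact Or.inl (by rw [map_add, hb0, add_zero]; exact ha)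
  · exact Or.inl (by rw [map_add, ha0, zero_add]; exact hb)
  · refine Or.inr ⟨by rw [map_add, ha0, hb0, add_zero], ?_⟩
    have hb_le : le b (a + b) := by simpa using hinv 0 a b ha
    exact _root_.trans hb hb_le

theorem eq_zero_of_mem_lexCone_of_neg_mem [Std.Antisymm le] {a : G} (ha : a ∈ lexCone τ le)
    (hna : -a ∈ lexCone τ le) : a = 0 := by
  simp only [lexCone, Set.mem_ofPred_eq, map_neg, neg_pos, neg_eq_zero] at ha hna
  rcases ha with ha | ⟨ha0, ha⟩ <;> rcases hna with hna | ⟨hna0, hna⟩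
  · exact absurd ha hna.not_gt
  · exact absurd hna0 ha.ne'
  · exact absurd ha0 hna.ne
  · have ha_le : le a 0 := by simpa using hinv 0 (-a) a hna
    exact antisymm ha_le ha

theorem mem_lexCone_or_neg_mem [Std.Total le] (a : G) :
    a ∈ lexCone τ le ∨ -a ∈ lexCone τ le := by
  simp only [lexCone, Set.mem_ofPred_eq, map_neg, neg_pos, neg_eq_zero]
  rcases lt_trichotomy (τ a) 0 with h | h | h
  · exact Or.inr (Or.inl h)
  · rcases total_of le 0 a with hle | hle
    · exact Or.inl (Or.inr ⟨h, hle⟩)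
    · exact Or.inr (Or.inr ⟨h, by simpa using hinv a 0 (-a) hle⟩)
  · exact Or.inl (Or.inl h)

end LexCone

theorem stmt_8_general {G : Type*} [AddCommGroup G]
    (Gpos : Set G)
    (u : G) (hu : u ∈ Gpos)
    (hunit : ∀ x : G, ∃ n : ℕ, n • u - x ∈ Gpos)
    (le : G → G → Prop) (hlin : IsLinearOrder G le)
    (hinv : ∀ x y z : G, le x y → le (x + z) (y + z))
    (τ : G →+ ℝ)
    (hτfaithful : ∀ a ∈ Gpos, a ≠ 0 → 0 < τ a)
    (P : Set G)
    (hP : P = {a : G | 0 < τ a ∨ (τ a = 0 ∧ le 0 a)}) :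
    (∀ a ∈ P, ∀ b ∈ P, a + b ∈ P) ∧
    (∀ a : G, a ∈ P → -a ∈ P → a = 0) ∧
    (∀ a : G, a ∈ P ∨ -a ∈ P) ∧
    Gpos ⊆ P ∧
    (u ∈ P ∧ ∀ x : G, ∃ n : ℕ, n • u - x ∈ P) := by
  change P = lexCone τ le at hP
  subst hP
  have hsub : Gpos ⊆ lexCone τ le := subset_lexCone τ hτfaithful
  exact ⟨fun _ ha _ hb => lexCone_add_mem τ hinv ha hb,
    fun _ ha hna => eq_zero_of_mem_lexCone_of_neg_mem τ hinv ha hna,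
    mem_lexCone_or_neg_mem τ hinv, hsub, hsub hu,
    fun x => (hunit x).imp fun _ hn => hsub hn⟩

/-- refining the order of a partially ordered abelian group with order
unit via a faithful state τ and a translation-invariant total order gives a totally
ordered abelian group with the same order unit, containing the original cone. -/
theorem stmt_8 {G : Type*} [AddCommGroup G]
    (Gpos : Set G)
    (hzero : (0 : G) ∈ Gpos)
    (hadd : ∀ a ∈ Gpos, ∀ b ∈ Gpos, a + b ∈ Gpos)
    (hpointed : ∀ a : G, a ∈ Gpos → -a ∈ Gpos → a = 0)
    (u : G) (hu : u ∈ Gpos)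
    (hunit : ∀ x : G, ∃ n : ℕ, n • u - x ∈ Gpos)
    (le : G → G → Prop) (hlin : IsLinearOrder G le)
    (hinv : ∀ x y z : G, le x y → le (x + z) (y + z))
    (τ : G →+ ℝ) (hτu : τ u = 1)
    (hτpos : ∀ a ∈ Gpos, 0 ≤ τ a)
    (hτfaithful : ∀ a ∈ Gpos, a ≠ 0 → 0 < τ a)
    (P : Set G)
    (hP : P = {a : G | 0 < τ a ∨ (τ a = 0 ∧ le 0 a)}) :
    (∀ a ∈ P, ∀ b ∈ P, a + b ∈ P) ∧
    (∀ a : G, a ∈ P → -a ∈ P → a = 0) ∧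
    (∀ a : G, a ∈ P ∨ -a ∈ P) ∧
    Gpos ⊆ P ∧
    (u ∈ P ∧ ∀ x : G, ∃ n : ℕ, n • u - x ∈ P) :=
  stmt_8_general Gpos u hu hunit le hlin hinv τ hτfaithful P hP
end

section
/- Let G be an abelian group carrying a ℚ-vector space structure, let P ⊆ G satisfy P + P ⊆ P and P ∩ (−P) = {0}, and let u ∈ P be an order unit of (G, P). Let τ : G → ℝ be an additive group homomorphism with τ(u) = 1 such that for every a ∈ G, τ(a) > 0 implies a ∈ P and τ(a) < 0 implies −a ∈ P. Then τ is a state of (G, P, u), and it is the unique state: every state ρ of (G, P, u) equals τ. -/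
/-!
Positivity of τ: if `a ∈ P` had `τ a < 0`, then also `-a ∈ P`, so `a = 0` since `P` is pointed.

Uniqueness: for a rational `q > τ a` the element `q • u - a` has positive τ-value, hence lies in
`P`, so any state ρ gives `ρ a ≤ q`. Thus `ρ a ≤ τ a`, and applying this to `-a` gives equality.
-/

lemma map_nonneg_of_neg_mem_of_neg {G : Type*} [AddCommGroup G] {P : Set G}
    (hpointed : ∀ a : G, a ∈ P → -a ∈ P → a = 0) (τ : G →+ ℝ)
    (hτ : ∀ a : G, τ a < 0 → -a ∈ P) {a : G} (ha : a ∈ P) : 0 ≤ τ a := by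
  by_contra! hneg
  simp [hpointed a ha (hτ a hneg)] at hneg

section RationalModule

variable {G : Type*} [AddCommGroup G] [Module ℚ G]

lemma map_rat_smul_eq_of_map_eq_one (ρ : G →+ ℝ) {u : G} (hρu : ρ u = 1) (q : ℚ) :
    ρ (q • u) = q := by
  rw [map_rat_smul, hρu, Rat.smul_one_eq_cast]

lemma map_le_of_pos_imp_nonneg {ρ τ : G →+ ℝ} {u : G} (hρu : ρ u = 1) (hτu : τ u = 1)
    (h : ∀ x : G, 0 < τ x → 0 ≤ ρ x) (a : G) : ρ a ≤ τ a := by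
  refine le_of_forall_lt_rat_imp_le fun q hq => ?_
  have hpos : 0 < τ (q • u - a) := by
    rw [map_sub, map_rat_smul_eq_of_map_eq_one τ hτu]
    linarith
  have hnonneg := h _ hpos
  rw [map_sub, map_rat_smul_eq_of_map_eq_one ρ hρu] at hnonneg
  linarith

lemma eq_of_pos_imp_nonneg {ρ τ : G →+ ℝ} {u : G} (hρu : ρ u = 1) (hτu : τ u = 1)
    (h : ∀ x : G, 0 < τ x → 0 ≤ ρ x) : ρ = τ := by
  ext a
  have hle := map_le_of_pos_imp_nonneg hρu hτu h
  have hneg := hle (-a)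
  rw [map_neg, map_neg] at hneg
  exact le_antisymm (hle a) (neg_le_neg_iff.mp hneg)

end RationalModule

theorem stmt_9_general {G : Type*} [AddCommGroup G] [Module ℚ G]
    (P : Set G)
    (hpointed : ∀ a : G, a ∈ P → -a ∈ P → a = 0)
    (u : G)
    (τ : G →+ ℝ) (hτu : τ u = 1)
    (hτ₁ : ∀ a : G, 0 < τ a → a ∈ P)
    (hτ₂ : ∀ a : G, τ a < 0 → -a ∈ P) :
    (∀ a ∈ P, 0 ≤ τ a) ∧
    ∀ ρ : G →+ ℝ, ρ u = 1 → (∀ a ∈ P, 0 ≤ ρ a) → ρ = τ :=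
  ⟨fun _ ha => map_nonneg_of_neg_mem_of_neg hpointed τ hτ₂ ha,
    fun _ hρu hρ => eq_of_pos_imp_nonneg hρu hτu fun x hx => hρ x (hτ₁ x hx)⟩

/-- if τ is an additive functional with τ(u) = 1 whose strict positivity
(resp. negativity) forces membership in P (resp. −P), then τ is the unique state of
(G, P, u). -/
theorem stmt_9 {G : Type*} [AddCommGroup G] [Module ℚ G]
    (P : Set G)
    (hzero : (0 : G) ∈ P)
    (hadd : ∀ a ∈ P, ∀ b ∈ P, a + b ∈ P)
    (hpointed : ∀ a : G, a ∈ P → -a ∈ P → a = 0)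
    (u : G) (hu : u ∈ P)
    (hunit : ∀ x : G, ∃ n : ℕ, n • u - x ∈ P)
    (τ : G →+ ℝ) (hτu : τ u = 1)
    (hτ₁ : ∀ a : G, 0 < τ a → a ∈ P)
    (hτ₂ : ∀ a : G, τ a < 0 → -a ∈ P) :
    (∀ a ∈ P, 0 ≤ τ a) ∧
    ∀ ρ : G →+ ℝ, ρ u = 1 → (∀ a ∈ P, 0 ≤ ρ a) → ρ = τ :=
  stmt_9_general P hpointed u τ hτu hτ₁ hτ₂
end

section
/- Let G = ℤ³ with positive cone P = {(x, y, z) ∈ ℤ³ : ((x > 0) or (x = 0 and y = 0)) and z ≥ 0} and u = (1, 0, 1). Then: (a) (G, P) is a partially ordered abelian group and u is an order unit; (b) the subgroup generated by (0, 1, −1) is singular, i.e., ℤ·(0, 1, −1) ∩ P = {0}; (c) every state ρ of (G, P, u) satisfies ρ(0, 1, 0) = 0; consequently every state ρ with ρ(0, 1, −1) = 0 satisfies ρ(0, 0, 1) = 0, and since (0, 0, 1) ∈ P \ {0}, no faithful state of (G, P, u) vanishes on (0, 1, −1). -/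
/-!
Every state is positive on `(1, n, 1) = u + n • (0, 1, 0)` for all `n : ℤ`, and an element all of
whose integer multiples are bounded below by `-ρ u` in an archimedean group must vanish. Hence
`ρ (0, 1, 0) = 0`, so a state killing `(0, 1, -1) = (0, 1, 0) - (0, 0, 1)` also kills the nonzero
positive element `(0, 0, 1)` and cannot be faithful.
-/

theorem eq_zero_of_forall_add_zsmul_nonneg {α : Type*} [AddCommGroup α] [LinearOrder α]
    [IsOrderedAddMonoid α] [Archimedean α] {a b : α} (h : ∀ n : ℤ, 0 ≤ a + n • b) : b = 0 := by
  have not_pos : ∀ {c : α}, (∀ n : ℤ, 0 ≤ a + n • c) → ¬ 0 < c := by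
    intro c hc hc_pos
    obtain ⟨m, hm⟩ := Archimedean.arch (a + c) hc_pos
    have hle := hc (-m)
    rw [neg_zsmul, natCast_zsmul, ← sub_eq_add_neg, sub_nonneg] at hle
    have hlt : a < a + c := lt_add_of_pos_right a hc_pos
    order
  rcases lt_trichotomy b 0 with hb | hb | hb
  · refine absurd (neg_pos.mpr hb) (not_pos fun n => ?_)
    rw [zsmul_neg, ← neg_zsmul]
    exact h (-n)
  · exact hb
  · exact absurd hb (not_pos h)

/-- The positive cone of `K₀(C(S²) ⊕ ℂ) ≅ ℤ³`: the first two coordinates are the rank and the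
first Chern class of a vector bundle over `S²`, the third is the `ℂ` summand. -/
def k0Cone : AddGroupCone (ℤ × ℤ × ℤ) where
  carrier := {p | (0 < p.1 ∨ (p.1 = 0 ∧ p.2.1 = 0)) ∧ 0 ≤ p.2.2}
  zero_mem' := by simp
  add_mem' := by
    rintro ⟨a₁, a₂, a₃⟩ ⟨b₁, b₂, b₃⟩ ⟨ha, ha₃⟩ ⟨hb, hb₃⟩
    simp only [Set.mem_ofPred_eq, Prod.mk_add_mk] at *
    omega
  eq_zero_of_mem_of_neg_mem' := by
    rintro ⟨a₁, a₂, a₃⟩ ⟨ha, ha₃⟩ ⟨hna, hna₃⟩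
    simp only [Prod.neg_mk, Prod.mk_eq_zero] at *
    omega

theorem mem_k0Cone {p : ℤ × ℤ × ℤ} :
    p ∈ k0Cone ↔ (0 < p.1 ∨ (p.1 = 0 ∧ p.2.1 = 0)) ∧ 0 ≤ p.2.2 :=
  Iff.rfl

theorem one_zero_one_mem_k0Cone : ((1, 0, 1) : ℤ × ℤ × ℤ) ∈ k0Cone := by
  simp [mem_k0Cone]

theorem zero_zero_one_mem_k0Cone : ((0, 0, 1) : ℤ × ℤ × ℤ) ∈ k0Cone := by
  simp [mem_k0Cone]

theorem exists_nsmul_sub_mem_k0Cone (x : ℤ × ℤ × ℤ) :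
    ∃ n : ℕ, n • ((1, 0, 1) : ℤ × ℤ × ℤ) - x ∈ k0Cone := by
  obtain ⟨a, b, c⟩ := x
  refine ⟨a.natAbs + c.natAbs + 1, ?_⟩
  simp only [mem_k0Cone, Prod.smul_mk, nsmul_eq_mul, mul_one, mul_zero, Prod.mk_sub_mk]
  omega

theorem zsmul_mem_k0Cone_iff (k : ℤ) : k • ((0, 1, -1) : ℤ × ℤ × ℤ) ∈ k0Cone ↔ k = 0 := by
  simp only [mem_k0Cone, Prod.smul_mk, smul_eq_mul]
  omega

theorem map_zero_one_zero_eq_zero_of_nonneg_on_k0Cone {α : Type*} [AddCommGroup α]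
    [LinearOrder α] [IsOrderedAddMonoid α] [Archimedean α] (ρ : ℤ × ℤ × ℤ →+ α)
    (hρ : ∀ a ∈ k0Cone, 0 ≤ ρ a) : ρ (0, 1, 0) = 0 := by
  refine eq_zero_of_forall_add_zsmul_nonneg (a := ρ (1, 0, 1)) fun n => ?_
  have hmem : (1, 0, 1) + n • ((0, 1, 0) : ℤ × ℤ × ℤ) ∈ k0Cone := by simp [mem_k0Cone]
  simpa only [map_add, map_zsmul] using hρ _ hmem

/-- the ordered group (ℤ³, P, u) with
P = {(x,y,z) : (x > 0 ∨ (x = 0 ∧ y = 0)) ∧ z ≥ 0} and u = (1,0,1):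
(a) it is a partially ordered abelian group with order unit u;
(b) ℤ·(0,1,−1) ∩ P = {0};
(c) every state kills (0,1,0); every state killing (0,1,−1) kills (0,0,1),
    and since (0,0,1) ∈ P \ {0}, no faithful state vanishes on (0,1,−1). -/
theorem stmt_10
    (P : Set (ℤ × ℤ × ℤ))
    (hP : P = {p : ℤ × ℤ × ℤ | (0 < p.1 ∨ (p.1 = 0 ∧ p.2.1 = 0)) ∧ 0 ≤ p.2.2}) :
    (((0 : ℤ × ℤ × ℤ) ∈ P) ∧
     (∀ a ∈ P, ∀ b ∈ P, a + b ∈ P) ∧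
     (∀ a : ℤ × ℤ × ℤ, a ∈ P → -a ∈ P → a = 0) ∧
     ((1, 0, 1) : ℤ × ℤ × ℤ) ∈ P ∧
     (∀ x : ℤ × ℤ × ℤ, ∃ n : ℕ, n • ((1, 0, 1) : ℤ × ℤ × ℤ) - x ∈ P)) ∧
    (∀ k : ℤ, k • ((0, 1, -1) : ℤ × ℤ × ℤ) ∈ P →
      k • ((0, 1, -1) : ℤ × ℤ × ℤ) = 0) ∧
    (∀ ρ : ℤ × ℤ × ℤ →+ ℝ, ρ (1, 0, 1) = 1 → (∀ a ∈ P, 0 ≤ ρ a) →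
      ρ (0, 1, 0) = 0 ∧ (ρ (0, 1, -1) = 0 → ρ (0, 0, 1) = 0)) ∧
    (((0, 0, 1) : ℤ × ℤ × ℤ) ∈ P ∧ ((0, 0, 1) : ℤ × ℤ × ℤ) ≠ 0) ∧
    (∀ ρ : ℤ × ℤ × ℤ →+ ℝ, ρ (1, 0, 1) = 1 → (∀ a ∈ P, 0 ≤ ρ a) →
      (∀ a ∈ P, a ≠ 0 → 0 < ρ a) → ρ (0, 1, -1) ≠ 0) := by
  obtain rfl : P = k0Cone := hP
  have state_kills : ∀ ρ : ℤ × ℤ × ℤ →+ ℝ, (∀ a ∈ k0Cone, 0 ≤ ρ a) →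
      ρ (0, 1, 0) = 0 ∧ (ρ (0, 1, -1) = 0 → ρ (0, 0, 1) = 0) := by
    intro ρ hρ
    have h010 := map_zero_one_zero_eq_zero_of_nonneg_on_k0Cone ρ hρ
    have hsplit : ((0, 1, -1) : ℤ × ℤ × ℤ) = (0, 1, 0) - (0, 0, 1) := rfl
    refine ⟨h010, fun h => ?_⟩
    rwa [hsplit, map_sub, h010, zero_sub, neg_eq_zero] at h
  refine ⟨⟨zero_mem _, fun a ha b hb => add_mem ha hb, fun a => eq_zero_of_mem_of_neg_mem,
    one_zero_one_mem_k0Cone, exists_nsmul_sub_mem_k0Cone⟩,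
    fun k hk => by rw [(zsmul_mem_k0Cone_iff k).mp hk, zero_smul],
    fun ρ _ hρ => state_kills ρ hρ, ⟨zero_zero_one_mem_k0Cone, by decide⟩, ?_⟩
  intro ρ _ hρ hfaithful hvanish
  exact (hfaithful _ zero_zero_one_mem_k0Cone (by decide)).ne' ((state_kills ρ hρ).2 hvanish)
end

section
/- Let (H, H⁺) be a torsion-free partially ordered abelian group and let N ⊆ H be an additive submonoid with N ∩ (−N) = {0} and N ∩ H⁺ = {0}. Then for every x ∈ H with x ≠ 0, there do not simultaneously exist integers n₁ ≥ 1 and n₂ ≤ −1 and elements a, b ∈ N such that a + n₁·x ∈ H⁺ and b + n₂·x ∈ H⁺. -/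
/-!
If `a + n₁ • x` and `b + n₂ • x` are both positive with `n₁ > 0 > n₂`, then clearing the signs,
`(-n₂) • a + n₁ • b` is positive and lies in `N`, hence vanishes. Since `N ∩ (-N) = {0}` and `H` is
torsion-free, this forces `a = b = 0`, and then `n₁ • x` and `n₂ • x` are positive multiples of `x`
of opposite signs, so `x = 0` because the cone is pointed.
-/

section AddClosed

variable {H : Type*} [AddCommGroup H] {S : Set H}

theorem nsmul_mem_of_add_mem (hS : ∀ a ∈ S, ∀ b ∈ S, a + b ∈ S) {a : H} (ha : a ∈ S)
    {n : ℕ} (hn : 1 ≤ n) : n • a ∈ S := by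
  induction n, hn using Nat.le_induction with
  | base => simpa using ha
  | succ k _ ih => rw [succ_nsmul]; exact hS _ ih _ ha

theorem nsmul_add_nsmul_mem_of_add_nsmul_mem_of_sub_nsmul_mem
    (hS : ∀ a ∈ S, ∀ b ∈ S, a + b ∈ S) {a b x : H} {m k : ℕ} (hm : 1 ≤ m) (hk : 1 ≤ k)
    (ha : a + m • x ∈ S) (hb : b - k • x ∈ S) : k • a + m • b ∈ S := by
  have hcomb : k • (a + m • x) + m • (b - k • x) = k • a + m • b := by
    simp only [smul_add, smul_sub, smul_smul, Nat.mul_comm m k]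
    abel
  rw [← hcomb]
  exact hS _ (nsmul_mem_of_add_mem hS ha hk) _ (nsmul_mem_of_add_mem hS hb hm)

theorem eq_zero_of_nsmul_mem_of_neg_nsmul_mem (hS : ∀ a ∈ S, ∀ b ∈ S, a + b ∈ S)
    (hpointed : ∀ a : H, a ∈ S → -a ∈ S → a = 0)
    (htf : ∀ n : ℕ, 1 ≤ n → ∀ x : H, n • x = 0 → x = 0) {x : H} {m k : ℕ}
    (hm : 1 ≤ m) (hk : 1 ≤ k) (hpos : m • x ∈ S) (hneg : -(k • x) ∈ S) : x = 0 := by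
  have hpos' : (k * m) • x ∈ S := by
    rw [mul_nsmul']; exact nsmul_mem_of_add_mem hS hpos hk
  have hneg' : -((k * m) • x) ∈ S := by
    rw [mul_nsmul, ← smul_neg]; exact nsmul_mem_of_add_mem hS hneg hm
  exact htf _ (Nat.mul_pos hk hm) _ (hpointed _ hpos' hneg')

theorem eq_zero_of_nsmul_add_nsmul_eq_zero (hS : ∀ a ∈ S, ∀ b ∈ S, a + b ∈ S)
    (hSS : ∀ a ∈ S, -a ∈ S → a = 0)
    (htf : ∀ n : ℕ, 1 ≤ n → ∀ x : H, n • x = 0 → x = 0) {a b : H} {m k : ℕ}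
    (hm : 1 ≤ m) (hk : 1 ≤ k) (ha : a ∈ S) (hb : b ∈ S) (hsum : m • a + k • b = 0) :
    a = 0 := by
  have hneg : -(m • a) = k • b := (eq_neg_of_add_eq_zero_right hsum).symm
  refine htf m hm a (hSS _ (nsmul_mem_of_add_mem hS ha hm) ?_)
  rw [hneg]
  exact nsmul_mem_of_add_mem hS hb hk

end AddClosed

theorem stmt_11_general {H : Type*} [AddCommGroup H]
    (Hpos : Set H)
    (hadd : ∀ a ∈ Hpos, ∀ b ∈ Hpos, a + b ∈ Hpos)
    (hpointed : ∀ a : H, a ∈ Hpos → -a ∈ Hpos → a = 0)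
    (htf : ∀ n : ℕ, 1 ≤ n → ∀ x : H, n • x = 0 → x = 0)
    (N : Set H)
    (hNadd : ∀ a ∈ N, ∀ b ∈ N, a + b ∈ N)
    (hNN : ∀ a ∈ N, -a ∈ N → a = 0)
    (hNpos : ∀ a ∈ N, a ∈ Hpos → a = 0) :
    ∀ x : H, x ≠ 0 →
      ¬ ∃ (n₁ n₂ : ℤ) (a b : H), 1 ≤ n₁ ∧ n₂ ≤ -1 ∧ a ∈ N ∧ b ∈ N ∧
        a + n₁ • x ∈ Hpos ∧ b + n₂ • x ∈ Hpos := by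
  rintro x hx ⟨n₁, n₂, a, b, h₁, h₂, ha, hb, hpa, hpb⟩
  obtain ⟨m, rfl⟩ : ∃ m : ℕ, n₁ = m := ⟨n₁.toNat, by omega⟩
  obtain ⟨k, rfl⟩ : ∃ k : ℕ, n₂ = -k := ⟨(-n₂).toNat, by omega⟩
  have hm : 1 ≤ m := by omega
  have hk : 1 ≤ k := by omega
  rw [natCast_zsmul] at hpa
  rw [neg_zsmul, natCast_zsmul, ← sub_eq_add_neg] at hpb
  have hsum : k • a + m • b = 0 :=
    hNpos _ (hNadd _ (nsmul_mem_of_add_mem hNadd ha hk) _ (nsmul_mem_of_add_mem hNadd hb hm))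
      (nsmul_add_nsmul_mem_of_add_nsmul_mem_of_sub_nsmul_mem hadd hm hk hpa hpb)
  obtain rfl := eq_zero_of_nsmul_add_nsmul_eq_zero hNadd hNN htf hk hm ha hb hsum
  obtain rfl := eq_zero_of_nsmul_add_nsmul_eq_zero hNadd hNN htf hm hk hb ha
    (by rwa [add_comm] at hsum)
  rw [zero_add] at hpa
  rw [zero_sub] at hpb
  exact hx (eq_zero_of_nsmul_mem_of_neg_nsmul_mem hadd hpointed htf hm hk hpa hpb)

/-- Claim 3 in Proposition 5.5: well-definedness of the sign function. -/
theorem stmt_11 {H : Type*} [AddCommGroup H]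
    (Hpos : Set H)
    (hzero : (0 : H) ∈ Hpos)
    (hadd : ∀ a ∈ Hpos, ∀ b ∈ Hpos, a + b ∈ Hpos)
    (hpointed : ∀ a : H, a ∈ Hpos → -a ∈ Hpos → a = 0)
    (htf : ∀ n : ℕ, 1 ≤ n → ∀ x : H, n • x = 0 → x = 0)
    (N : Set H)
    (hN0 : (0 : H) ∈ N)
    (hNadd : ∀ a ∈ N, ∀ b ∈ N, a + b ∈ N)
    (hNN : ∀ a ∈ N, -a ∈ N → a = 0)
    (hNpos : ∀ a ∈ N, a ∈ Hpos → a = 0) :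
    ∀ x : H, x ≠ 0 →
      ¬ ∃ (n₁ n₂ : ℤ) (a b : H), 1 ≤ n₁ ∧ n₂ ≤ -1 ∧ a ∈ N ∧ b ∈ N ∧
        a + n₁ • x ∈ Hpos ∧ b + n₂ • x ∈ Hpos :=
  stmt_11_general Hpos hadd hpointed htf N hNadd hNN hNpos
end

section
/- Let (H, H⁺) be an unperforated partially ordered abelian group and let N ⊆ H be an additive submonoid with N ∩ (−N) = {0} and N ∩ H⁺ = {0}. Suppose x, y ∈ H \ {0}, integers k, m ≥ 1, and a, b ∈ N satisfy a + k·x ∈ H⁺ and b + m·y ∈ H⁺. Then x + y ≠ 0 and (m·a + k·b) + m·k·(x + y) ∈ H⁺. -/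
/-!
If `x + y = 0`, the positive element `m • (a + k • x) + k • (b + m • y)` collapses to
`m • a + k • b ∈ N`; this forces `m • a = k • b = 0` because `N` is pointed and meets the
positive cone only in `0`. Then `(m * k) • x` and `(m * k) • y = -(m * k) • x` are both positive,
so unperforation makes `x` and `-x` positive, i.e. `x = 0`.
-/

section AddClosed

variable {H : Type*} [AddCommGroup H]

theorem zsmul_mem_of_add_mem {S : Set H} (hS : ∀ u ∈ S, ∀ v ∈ S, u + v ∈ S)
    {n : ℤ} (hn : 1 ≤ n) {p : H} (hp : p ∈ S) : n • p ∈ S := by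
  induction n, hn using Int.leInduction with
  | base => simpa using hp
  | succ n _ ih => simpa only [add_smul, one_smul] using hS _ ih _ hp

theorem eq_zero_of_add_mem_of_pointed {P N : Set H}
    (hNadd : ∀ a ∈ N, ∀ b ∈ N, a + b ∈ N) (hNN : ∀ a ∈ N, -a ∈ N → a = 0)
    (hNpos : ∀ a ∈ N, a ∈ P → a = 0) {a b : H} (ha : a ∈ N) (hb : b ∈ N)
    (hab : a + b ∈ P) : a = 0 := by
  have hab0 : a + b = 0 := hNpos _ (hNadd _ ha _ hb) hab
  exact hNN a ha (by rwa [neg_eq_of_add_eq_zero_right hab0])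

end AddClosed

theorem stmt_12_general {H : Type*} [AddCommGroup H]
    (Hpos : Set H)
    (hadd : ∀ a ∈ Hpos, ∀ b ∈ Hpos, a + b ∈ Hpos)
    (hpointed : ∀ a : H, a ∈ Hpos → -a ∈ Hpos → a = 0)
    (hunperf : ∀ n : ℤ, 1 ≤ n → ∀ x : H, n • x ∈ Hpos → x ∈ Hpos)
    (N : Set H)
    (hNadd : ∀ a ∈ N, ∀ b ∈ N, a + b ∈ N)
    (hNN : ∀ a ∈ N, -a ∈ N → a = 0)
    (hNpos : ∀ a ∈ N, a ∈ Hpos → a = 0)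
    (x y : H) (hx : x ≠ 0)
    (k m : ℤ) (hk : 1 ≤ k) (hm : 1 ≤ m)
    (a b : H) (ha : a ∈ N) (hb : b ∈ N)
    (hax : a + k • x ∈ Hpos) (hby : b + m • y ∈ Hpos) :
    x + y ≠ 0 ∧ (m • a + k • b) + (m * k) • (x + y) ∈ Hpos := by
  have hmax := zsmul_mem_of_add_mem hadd hm hax
  have hkby := zsmul_mem_of_add_mem hadd hk hby
  have hsum : m • (a + k • x) + k • (b + m • y) = (m • a + k • b) + (m * k) • (x + y) := by
    simp only [smul_add, smul_smul, mul_comm k m]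
    abel
  have hcombo : (m • a + k • b) + (m * k) • (x + y) ∈ Hpos := hsum ▸ hadd _ hmax _ hkby
  refine ⟨fun hxy => hx ?_, hcombo⟩
  have hma := zsmul_mem_of_add_mem hNadd hm ha
  have hkb := zsmul_mem_of_add_mem hNadd hk hb
  have hpos : m • a + k • b ∈ Hpos := by rwa [hxy, smul_zero, add_zero] at hcombo
  have hma0 : m • a = 0 := eq_zero_of_add_mem_of_pointed hNadd hNN hNpos hma hkb hpos
  have hkb0 : k • b = 0 :=
    eq_zero_of_add_mem_of_pointed hNadd hNN hNpos hkb hma (by rwa [add_comm])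
  have hmk : 1 ≤ m * k := one_le_mul_of_one_le_of_one_le hm hk
  have hxpos : x ∈ Hpos := hunperf _ hmk x (by rwa [smul_add, hma0, zero_add, smul_smul] at hmax)
  have hypos : y ∈ Hpos :=
    hunperf _ hmk y (by rwa [smul_add, hkb0, zero_add, smul_smul, mul_comm] at hkby)
  exact hpointed x hxpos (by rwa [← eq_neg_of_add_eq_zero_right hxy])

/-- Claim 4 in Proposition 5.5: additivity of positivity for the sign
function on an unperforated partially ordered abelian group. -/
theorem stmt_12 {H : Type*} [AddCommGroup H]
    (Hpos : Set H)
    (hzero : (0 : H) ∈ Hpos)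
    (hadd : ∀ a ∈ Hpos, ∀ b ∈ Hpos, a + b ∈ Hpos)
    (hpointed : ∀ a : H, a ∈ Hpos → -a ∈ Hpos → a = 0)
    (hunperf : ∀ n : ℤ, 1 ≤ n → ∀ x : H, n • x ∈ Hpos → x ∈ Hpos)
    (N : Set H)
    (hN0 : (0 : H) ∈ N)
    (hNadd : ∀ a ∈ N, ∀ b ∈ N, a + b ∈ N)
    (hNN : ∀ a ∈ N, -a ∈ N → a = 0)
    (hNpos : ∀ a ∈ N, a ∈ Hpos → a = 0)
    (x y : H) (hx : x ≠ 0) (hy : y ≠ 0)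
    (k m : ℤ) (hk : 1 ≤ k) (hm : 1 ≤ m)
    (a b : H) (ha : a ∈ N) (hb : b ∈ N)
    (hax : a + k • x ∈ Hpos) (hby : b + m • y ∈ Hpos) :
    x + y ≠ 0 ∧ (m • a + k • b) + (m * k) • (x + y) ∈ Hpos :=
  stmt_12_general Hpos hadd hpointed hunperf N hNadd hNN hNpos x y hx k m hk hm a b ha hb hax hby
end

section
/- Let (K₁, K₁⁺), …, (Kₙ, Kₙ⁺) be partially ordered abelian groups, let K = K₁ × ⋯ × Kₙ with the product cone K⁺ = K₁⁺ × ⋯ × Kₙ⁺, and let G ≤ K be a maximally singular subgroup. For each i set Gᵢ⁰ = {x ∈ Kᵢ : ιᵢ(x) ∈ G}, where ιᵢ : Kᵢ → K places x in the i-th coordinate and 0 elsewhere; let Hᵢ = Kᵢ/Gᵢ⁰ with quotient cone Hᵢ⁺ = {x + Gᵢ⁰ : ∃ y ∈ Gᵢ⁰ with x + y ∈ Kᵢ⁺}, let πᵢ : Kᵢ → Hᵢ be the quotient map, and let π = π₁ × ⋯ × πₙ : K → H₁ × ⋯ × Hₙ, with H₁ × ⋯ × Hₙ carrying the product cone H₁⁺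 × ⋯ × Hₙ⁺. Then: (i) π(G) ∩ (H₁⁺ × ⋯ × Hₙ⁺) = {0}, i.e., π(G) is singular; (ii) π(G) is maximally singular in H₁ × ⋯ × Hₙ; (iii) if yᵢ ∈ Hᵢ and the element of H₁ × ⋯ × Hₙ with i-th coordinate yᵢ and all other coordinates 0 lies in π(G), then yᵢ = 0. -/
/-! The coordinatewise quotient map `π` is surjective, its kernel `∏ Gᵢ⁰` lies in `G`, and it
maps the product cone of the `Kᵢ` onto that of the `Hᵢ`. For such a map, singular subgroups
containing `ker π` correspond under `map π` and `comap π`, so maximality transfers to `π(G)`;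
and `π(G)` pulls back to `G`, so an element `ιᵢ(yᵢ)` of `π(G)` lifts to some `ιᵢ(x) ∈ G`,
i.e. `x ∈ Gᵢ⁰` and `yᵢ = 0`. -/

namespace AddSubgroup

variable {A B : Type*} [AddCommGroup A] [AddCommGroup B]

def IsSingular_s14 (C : Set A) (G : AddSubgroup A) : Prop := ∀ f ∈ G, f ∈ C → f = 0

variable {C : Set A} {D : Set B} {G : AddSubgroup A} {π : A →+ B}

theorem IsSingular_s14.map (hG : IsSingular_s14 C G) (hker : π.ker ≤ G) (hD : D ⊆ π '' C) :
    IsSingular_s14 D (G.map π) := by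
  rintro _ ⟨f, hf, rfl⟩ hfD
  obtain ⟨c, hc, hcf⟩ := hD hfD
  have hcf_ker : c - f ∈ π.ker := by rw [AddMonoidHom.mem_ker, map_sub, hcf, sub_self]
  have hcG : c ∈ G := by simpa using add_mem (hker hcf_ker) hf
  rw [← hcf, hG c hcG hc, map_zero]

theorem IsSingular_s14.comap {L : AddSubgroup B} (hL : IsSingular_s14 D L) (hG : IsSingular_s14 C G)
    (hker : π.ker ≤ G) (hD : π '' C ⊆ D) : IsSingular_s14 C (L.comap π) := fun f hf hfC =>
  hG f (hker (hL (π f) hf (hD ⟨f, hfC, rfl⟩))) hfC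

theorem maximal_isSingular_map (hπ : Function.Surjective π) (hker : π.ker ≤ G) (hD : D = π '' C)
    (hG : Maximal (IsSingular_s14 C) G) : Maximal (IsSingular_s14 D) (G.map π) := by
  refine ⟨hG.1.map hker hD.le, fun L hL hle => ?_⟩
  have hcomap : L.comap π ≤ G :=
    hG.2 (hL.comap hG.1 hker hD.ge) (map_le_iff_le_comap.1 hle)
  calc L = (L.comap π).map π := (map_comap_eq_self_of_surjective hπ L).symm
    _ ≤ G.map π := map_mono hcomap

theorem isSingular_univ_pi_iff {ι : Type*} {K : ι → Type*} [∀ i, AddCommGroup (K i)]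
    {P : ∀ i, Set (K i)} {G : AddSubgroup (∀ i, K i)} :
    IsSingular_s14 (Set.univ.pi P) G ↔ ∀ f ∈ G, (∀ i, f i ∈ P i) → f = 0 := by
  simp only [IsSingular_s14, Set.mem_univ_pi]

end AddSubgroup

theorem QuotientAddGroup.image_mk_eq_setOf_exists_add_mem {M : Type*} [AddCommGroup M]
    (N : AddSubgroup M) (P : Set M) :
    {ξ : M ⧸ N | ∃ x : M, QuotientAddGroup.mk x = ξ ∧ ∃ y ∈ N, x + y ∈ P} =
      QuotientAddGroup.mk '' P := by
  ext ξ
  constructor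
  · rintro ⟨x, rfl, y, hy, hxy⟩
    exact ⟨x + y, hxy, QuotientAddGroup.eq.2 (by simpa using hy)⟩
  · rintro ⟨x, hx, rfl⟩
    exact ⟨x, rfl, 0, zero_mem N, by simpa using hx⟩

theorem stmt_14_general {n : ℕ} (K : Fin n → Type*) [∀ i, AddCommGroup (K i)]
    (Kpos : ∀ i, Set (K i))
    (G : AddSubgroup (∀ i, K i))
    (hGsing : ∀ f ∈ G, (∀ i, f i ∈ Kpos i) → f = 0)
    (hGmax : ∀ G' : AddSubgroup (∀ i, K i),
      (∀ f ∈ G', (∀ i, f i ∈ Kpos i) → f = 0) → G ≤ G' → G' = G)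
    (Gzero : ∀ i, AddSubgroup (K i))
    (hGzero : ∀ (i : Fin n) (x : K i), x ∈ Gzero i ↔ Pi.single i x ∈ G)
    (Hpos : ∀ i, Set (K i ⧸ Gzero i))
    (hHpos : ∀ i, Hpos i = {ξ : K i ⧸ Gzero i |
      ∃ x : K i, QuotientAddGroup.mk x = ξ ∧ ∃ y ∈ Gzero i, x + y ∈ Kpos i})
    (π : (∀ i, K i) →+ ∀ i, K i ⧸ Gzero i)
    (hπ : ∀ (f : ∀ i, K i) (i : Fin n), π f i = QuotientAddGroup.mk (f i)) :
    (∀ z ∈ G.map π, (∀ i, z i ∈ Hpos i) → z = 0) ∧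
    (∀ L : AddSubgroup (∀ i, K i ⧸ Gzero i),
      (∀ z ∈ L, (∀ i, z i ∈ Hpos i) → z = 0) → G.map π ≤ L → L = G.map π) ∧
    (∀ (i : Fin n) (y : K i ⧸ Gzero i), Pi.single i y ∈ G.map π → y = 0) := by
  have hπ_eq : ⇑π = Pi.map fun _ => QuotientAddGroup.mk := funext fun f => funext (hπ f)
  have hker : π.ker ≤ G := fun f hf => AddSubgroup.pi_mem_of_single_mem f fun i =>
    (hGzero i _).1 <| (QuotientAddGroup.eq_zero_iff _).1 <| by rw [← hπ, hf, Pi.zero_apply]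
  have hcone : Set.univ.pi Hpos = π '' Set.univ.pi Kpos := by
    rw [hπ_eq, Set.piMap_image_univ_pi]
    congr 1 with i : 1
    rw [hHpos, QuotientAddGroup.image_mk_eq_setOf_exists_add_mem]
  have hmax : Maximal (AddSubgroup.IsSingular_s14 (Set.univ.pi Hpos)) (G.map π) :=
    AddSubgroup.maximal_isSingular_map (hπ_eq ▸ .piMap fun _ => QuotientAddGroup.mk_surjective)
      hker hcone ⟨AddSubgroup.isSingular_univ_pi_iff.2 hGsing,
        fun G' hG' hle => (hGmax G' (AddSubgroup.isSingular_univ_pi_iff.1 hG') hle).le⟩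
  refine ⟨AddSubgroup.isSingular_univ_pi_iff.1 hmax.1,
    fun L hL hle => (hmax.2 (AddSubgroup.isSingular_univ_pi_iff.2 hL) hle).antisymm hle, ?_⟩
  rintro i y hy
  obtain ⟨x, rfl⟩ := QuotientAddGroup.mk_surjective y
  have hπ_single : π (Pi.single i x) = Pi.single i (QuotientAddGroup.mk x) := funext fun j =>
    (hπ _ j).trans (Pi.apply_single _ (fun _ => QuotientAddGroup.mk_zero _) i x j)
  have hx : Pi.single i x ∈ G :=
    (AddSubgroup.comap_map_eq_self hker).le (by rwa [AddSubgroup.mem_comap, hπ_single])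
  exact (QuotientAddGroup.eq_zero_iff x).2 ((hGzero i x).2 hx)

/-- Claim 1 in Proposition 5.5: the image of a maximally singular
subgroup of a finite product of partially ordered abelian groups under the coordinatewise
quotient by the groups Gᵢ⁰ is maximally singular, and contains no nonzero element
supported in a single coordinate. -/
theorem stmt_14 {n : ℕ} (K : Fin n → Type*) [∀ i, AddCommGroup (K i)]
    (Kpos : ∀ i, Set (K i))
    (hzero : ∀ i, (0 : K i) ∈ Kpos i)
    (hadd : ∀ i, ∀ a ∈ Kpos i, ∀ b ∈ Kpos i, a + b ∈ Kpos i)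
    (hpointed : ∀ i, ∀ a : K i, a ∈ Kpos i → -a ∈ Kpos i → a = 0)
    (G : AddSubgroup (∀ i, K i))
    (hGsing : ∀ f ∈ G, (∀ i, f i ∈ Kpos i) → f = 0)
    (hGmax : ∀ G' : AddSubgroup (∀ i, K i),
      (∀ f ∈ G', (∀ i, f i ∈ Kpos i) → f = 0) → G ≤ G' → G' = G)
    (Gzero : ∀ i, AddSubgroup (K i))
    (hGzero : ∀ (i : Fin n) (x : K i), x ∈ Gzero i ↔ Pi.single i x ∈ G)
    (Hpos : ∀ i, Set (K i ⧸ Gzero i))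
    (hHpos : ∀ i, Hpos i = {ξ : K i ⧸ Gzero i |
      ∃ x : K i, QuotientAddGroup.mk x = ξ ∧ ∃ y ∈ Gzero i, x + y ∈ Kpos i})
    (π : (∀ i, K i) →+ ∀ i, K i ⧸ Gzero i)
    (hπ : ∀ (f : ∀ i, K i) (i : Fin n), π f i = QuotientAddGroup.mk (f i)) :
    (∀ z ∈ G.map π, (∀ i, z i ∈ Hpos i) → z = 0) ∧
    (∀ L : AddSubgroup (∀ i, K i ⧸ Gzero i),
      (∀ z ∈ L, (∀ i, z i ∈ Hpos i) → z = 0) → G.map π ≤ L → L = G.map π) ∧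
    (∀ (i : Fin n) (y : K i ⧸ Gzero i), Pi.single i y ∈ G.map π → y = 0) :=
  stmt_14_general K Kpos G hGsing hGmax Gzero hGzero Hpos hHpos π hπ
end

section
/- Let (H₁, H₁⁺), …, (Hₙ, Hₙ⁺) be partially ordered abelian groups, let H = H₁ × ⋯ × Hₙ with the product cone H⁺ = H₁⁺ × ⋯ × Hₙ⁺, and let S ≤ H be a subgroup with S ∩ H⁺ = {0}. Then there is no element x = (x₁, …, xₙ) ∈ S \ {0} with the following property: for every index i with xᵢ ≠ 0 there exist an integer m ≥ 1 and a ∈ S such that the j-th coordinate of a lies in Hⱼ⁺ for every j ≠ i, and a + m·ιᵢ(xᵢ) ∈ H⁺ \ {0}, where ιᵢ(xᵢ) denotes the element of H with i-th coordinate xᵢ and all other coordinates 0. -/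
/-!
Suppose such an `x` exists and pick, for every `i`, witnesses `mᵢ ≥ 1`, `aᵢ ∈ S` with
`cᵢ = aᵢ + mᵢ • ιᵢ(xᵢ) ≥ 0` (for `xᵢ = 0` take `mᵢ = 1`, `aᵢ = 0`). With `wᵢ = ∏_{k ≠ i} mₖ`
all products `wᵢ mᵢ` equal `M = ∏ₖ mₖ`, so `∑ wᵢ • cᵢ = ∑ wᵢ • aᵢ + M • x` lies in `S` and in the
cone, hence vanishes. A sum of cone elements vanishes only if every summand does, and the cone
has no torsion, so every `cᵢ = 0`, contradicting `cⱼ ≠ 0` for an index with `xⱼ ≠ 0`.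
-/

open Finset

namespace AddGroupCone

variable {ι : Type*} {H : ι → Type*} [∀ i, AddCommGroup (H i)]

def pi (C : ∀ i, AddGroupCone (H i)) : AddGroupCone (∀ i, H i) where
  toAddSubmonoid := AddSubmonoid.pi Set.univ fun i => (C i).toAddSubmonoid
  eq_zero_of_mem_of_neg_mem' ha hna :=
    funext fun i => (C i).eq_zero_of_mem_of_neg_mem' (ha i trivial) (hna i trivial)

theorem mem_pi {C : ∀ i, AddGroupCone (H i)} {f : ∀ i, H i} : f ∈ pi C ↔ ∀ i, f i ∈ C i :=
  show f ∈ AddSubmonoid.pi _ _ ↔ _ from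
    (AddSubmonoid.mem_pi _).trans ⟨fun h i => h i trivial, fun h i _ => h i⟩

end AddGroupCone

section Cone

variable {G T : Type*} [AddCommGroup G] [SetLike T G] [AddGroupConeClass T G] {C : T}

theorem zsmul_mem_of_nonneg {m : ℤ} (hm : 0 ≤ m) {v : G} (hv : v ∈ C) : m • v ∈ C := by
  lift m to ℕ using hm
  rw [natCast_zsmul]
  exact nsmul_mem hv m

theorem eq_zero_of_zsmul_eq_zero_of_mem {m : ℤ} (hm : 0 < m) {v : G} (hv : v ∈ C)
    (h : m • v = 0) : v = 0 := by
  refine eq_zero_of_mem_of_neg_mem hv ?_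
  have : -v = (m - 1) • v := by rw [sub_smul, one_smul, h, zero_sub]
  exact this ▸ zsmul_mem_of_nonneg (by omega) hv

theorem eq_zero_of_sum_eq_zero_of_mem {α : Type*} {s : Finset α} {f : α → G}
    (hf : ∀ i ∈ s, f i ∈ C) (hsum : ∑ i ∈ s, f i = 0) : ∀ i ∈ s, f i = 0 := by
  classical
  intro i hi
  refine eq_zero_of_mem_of_neg_mem (hf i hi) ?_
  rw [← add_sum_erase s f hi] at hsum
  rw [neg_eq_of_add_eq_zero_right hsum]
  exact sum_mem fun k hk => hf k (mem_of_mem_erase hk)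

theorem add_zsmul_eq_zero_of_mem {ι : Type*} [Fintype ι] (S : AddSubgroup G)
    (hS : ∀ g ∈ S, g ∈ C → g = 0) {m : ι → ℤ} (hm : ∀ i, 0 < m i) {a y : ι → G}
    (ha : ∀ i, a i ∈ S) (hy : ∑ i, y i ∈ S) (hc : ∀ i, a i + m i • y i ∈ C) (i : ι) :
    a i + m i • y i = 0 := by
  classical
  set w : ι → ℤ := fun i => ∏ k ∈ univ.erase i, m k
  have hw : ∀ i, 0 < w i := fun i => prod_pos fun k _ => hm k
  have hwm : ∀ i, w i * m i = ∏ k, m k := fun i => prod_erase_mul _ _ (mem_univ i)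
  have hwc : ∀ i, w i • (a i + m i • y i) ∈ C := fun i => zsmul_mem_of_nonneg (hw i).le (hc i)
  have hsumS : ∑ i, w i • (a i + m i • y i) ∈ S := by
    have : ∑ i, w i • (a i + m i • y i) = ∑ i, w i • a i + (∏ k, m k) • ∑ i, y i := by
      simp only [smul_add, smul_smul, hwm, sum_add_distrib, smul_sum]
    rw [this]
    exact add_mem (sum_mem fun i _ => zsmul_mem (ha i) _) (zsmul_mem hy _)
  have hsum0 := hS _ hsumS (sum_mem fun i _ => hwc i)
  exact eq_zero_of_zsmul_eq_zero_of_mem (hw i) (hc i)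
    (eq_zero_of_sum_eq_zero_of_mem (fun i _ => hwc i) hsum0 i (mem_univ i))

end Cone

/-- Claim 6 in Proposition 5.5. -/
theorem stmt_15 {n : ℕ} (H : Fin n → Type*) [∀ i, AddCommGroup (H i)]
    (Hpos : ∀ i, Set (H i))
    (hzero : ∀ i, (0 : H i) ∈ Hpos i)
    (hadd : ∀ i, ∀ a ∈ Hpos i, ∀ b ∈ Hpos i, a + b ∈ Hpos i)
    (hpointed : ∀ i, ∀ a : H i, a ∈ Hpos i → -a ∈ Hpos i → a = 0)
    (S : AddSubgroup (∀ i, H i))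
    (hSsing : ∀ f ∈ S, (∀ i, f i ∈ Hpos i) → f = 0) :
    ¬ ∃ x : ∀ i, H i, x ∈ S ∧ x ≠ 0 ∧
      ∀ i : Fin n, x i ≠ 0 →
        ∃ (m : ℤ) (a : ∀ i, H i), 1 ≤ m ∧ a ∈ S ∧
          (∀ j, j ≠ i → a j ∈ Hpos j) ∧
          (∀ j, (a + m • Pi.single i (x i)) j ∈ Hpos j) ∧
          a + m • Pi.single i (x i) ≠ 0 := by
  rintro ⟨x, hxS, hx0, hx⟩
  let C : ∀ i, AddGroupCone (H i) := fun i =>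
    { carrier := Hpos i
      zero_mem' := hzero i
      add_mem' := fun ha hb => hadd i _ ha _ hb
      eq_zero_of_mem_of_neg_mem' := fun ha hna => hpointed i _ ha hna }
  obtain ⟨j, hj⟩ := Function.ne_iff.mp hx0
  have witness : ∀ i, ∃ (m : ℤ) (a : ∀ i, H i), 0 < m ∧ a ∈ S ∧
      a + m • Pi.single i (x i) ∈ AddGroupCone.pi C ∧
      (x i ≠ 0 → a + m • Pi.single i (x i) ≠ 0) := by
    intro i
    by_cases hxi : x i = 0
    · exact ⟨1, 0, one_pos, S.zero_mem, by simp [hxi],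
        absurd hxi⟩
    · obtain ⟨m, a, hm, haS, -, hpos, hne⟩ := hx i hxi
      exact ⟨m, a, hm, haS, AddGroupCone.mem_pi.2 hpos, fun _ => hne⟩
  choose m a hm haS hc hne using witness
  refine hne j hj (add_zsmul_eq_zero_of_mem S ?_ hm haS ?_ hc j)
  · exact fun f hfS hfC => hSsing f hfS (AddGroupCone.mem_pi.1 hfC)
  · rwa [univ_sum_single]
end

section
/- Let G be a countable abelian group carrying a ℚ-vector space structure, let G⁺ ⊆ G be a positive cone (0 ∈ G⁺, G⁺ + G⁺ ⊆ G⁺, G⁺ ∩ (−G⁺) = {0}), let u ∈ G⁺ be an order unit, let τ be a faithful state of (G, G⁺, u), and let x ∈ G \ {0} with τ(x) = 0. Then there exists a subset P ⊆ G with P + P ⊆ P, P ∩ (−P) = {0}, P ∪ (−P) = G, G⁺ ⊆ P, x ∈ P \ {0}, such that u is an order unit of (G, P) and τ is the unique state of (G, P, u). -/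
/-!
Pick a total cone `C` on `G` containing `x`: pull back the lexicographic order of coordinates in
a `ℚ`-basis, composed with negation if needed. Then order `G` lexicographically, first by `τ` and
then by `C`. Faithfulness of `τ` makes this refine `Gpos`, and `x` is positive because `τ x = 0`.
A state `ρ` that is nonnegative on the new cone is nonnegative wherever `τ` is positive;
comparing with the rational multiples `q • u`, where `ρ` and `τ` agree, gives `ρ = τ`.
-/

namespace AddGroupCone

variable {G H : Type*} [AddCommGroup G] [AddCommGroup H]

def comap (f : G →+ H) (hf : Function.Injective f) (C : AddGroupCone H) : AddGroupCone G where
  __ := C.toAddSubmonoid.comap f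
  eq_zero_of_mem_of_neg_mem' {a} ha hna :=
    hf <| (map_zero f).symm ▸ eq_zero_of_mem_of_neg_mem (C := C) ha (map_neg f a ▸ hna)

@[simp]
lemma mem_comap {f : G →+ H} {hf : Function.Injective f} {C : AddGroupCone H} {a : G} :
    a ∈ C.comap f hf ↔ f a ∈ C := Iff.rfl

theorem hasMemOrNegMem_comap {f : G →+ H} (hf : Function.Injective f) {C : AddGroupCone H}
    [HasMemOrNegMem C] :
    HasMemOrNegMem (C.comap f hf) where
  mem_or_neg_mem a := by simpa using mem_or_neg_mem C (f a)

end AddGroupCone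

theorem Module.Free.exists_addGroupCone_hasMemOrNegMem (R V : Type*) [Ring R] [LinearOrder R]
    [IsOrderedRing R] [AddCommGroup V] [Module R V] [Module.Free R V] :
    ∃ C : AddGroupCone V, HasMemOrNegMem C := by
  obtain ⟨ι, b⟩ := Module.Free.exists_basis (R := R) (M := V)
  let _ : LinearOrder ι := WellOrderingRel.isWellOrder.linearOrder
  let f : V →+ Lex (ι →₀ R) := (toLexAddEquiv _).toAddMonoidHom.comp b.repr.toAddMonoidHom
  exact ⟨_, AddGroupCone.hasMemOrNegMem_comap (C := AddGroupCone.nonneg (Lex (ι →₀ R)))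
    (f := f) ((toLexAddEquiv _).injective.comp b.repr.injective)⟩

theorem Module.Free.exists_addGroupCone_hasMemOrNegMem_mem (R : Type*) {V : Type*} [Ring R]
    [LinearOrder R] [IsOrderedRing R] [AddCommGroup V] [Module R V] [Module.Free R V] (x : V) :
    ∃ C : AddGroupCone V, HasMemOrNegMem C ∧ x ∈ C := by
  obtain ⟨C, hC⟩ := exists_addGroupCone_hasMemOrNegMem R V
  rcases mem_or_neg_mem C x with hx | hx
  · exact ⟨C, hC, hx⟩
  · exact ⟨C.comap (-AddMonoidHom.id V) neg_injective, AddGroupCone.hasMemOrNegMem_comap _, hx⟩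

namespace AddGroupCone

variable {G L : Type*} [AddCommGroup G] [AddCommGroup L] [LinearOrder L] [IsOrderedAddMonoid L]

def lex (τ : G →+ L) (C : AddGroupCone G) : AddGroupCone G where
  carrier := {a | 0 < τ a ∨ τ a = 0 ∧ a ∈ C}
  zero_mem' := .inr ⟨map_zero τ, C.zero_mem⟩
  add_mem' := by
    rintro a b (ha | ⟨ha, haC⟩) (hb | ⟨hb, hbC⟩) <;> simp only [Set.mem_ofPred_eq, map_add]
    · exact .inl (add_pos ha hb)
    · exact .inl (by rwa [hb, add_zero])
    · exact .inl (by rwa [ha, zero_add])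
    · exact .inr ⟨by rw [ha, hb, add_zero], add_mem haC hbC⟩
  eq_zero_of_mem_of_neg_mem' := by
    rintro a (ha | ⟨ha, haC⟩) (hna | ⟨hna, hnaC⟩) <;>
      simp only [map_neg, neg_pos, neg_eq_zero] at hna
    · exact absurd ha hna.not_gt
    · exact absurd hna ha.ne'
    · exact absurd hna ha.not_lt
    · exact eq_zero_of_mem_of_neg_mem haC hnaC

variable {τ : G →+ L} {C : AddGroupCone G} {a : G}

lemma mem_lex : a ∈ lex τ C ↔ 0 < τ a ∨ τ a = 0 ∧ a ∈ C := Iff.rfl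

lemma mem_lex_of_pos (h : 0 < τ a) : a ∈ lex τ C := .inl h

lemma nonneg_of_mem_lex (h : a ∈ lex τ C) : 0 ≤ τ a := by
  rcases h with h | ⟨h, -⟩
  exacts [h.le, h.ge]

instance [HasMemOrNegMem C] : HasMemOrNegMem (lex τ C) where
  mem_or_neg_mem a := by
    simp only [mem_lex, map_neg, neg_pos, neg_eq_zero]
    rcases lt_trichotomy (τ a) 0 with h | h | h
    · exact .inr (.inl h)
    · rcases mem_or_neg_mem C a with ha | ha
      exacts [.inl (.inr ⟨h, ha⟩), .inr (.inr ⟨h, ha⟩)]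
    · exact .inl (.inl h)

end AddGroupCone

theorem AddMonoidHom.eq_of_forall_pos_imp_nonneg {G : Type*} [AddCommGroup G] [Module ℚ G]
    {ρ τ : G →+ ℝ} {u : G} (hρu : ρ u = 1) (hτu : τ u = 1) (h : ∀ a, 0 < τ a → 0 ≤ ρ a) :
    ρ = τ := by
  have hle : ∀ a, τ a ≤ ρ a := fun a => le_of_forall_rat_lt_imp_le fun q hq => by
    have := h (a - q • u) (by rwa [map_sub, map_rat_smul, hτu, Rat.smul_one_eq_cast, sub_pos])
    rwa [map_sub, map_rat_smul, hρu, Rat.smul_one_eq_cast, sub_nonneg] at this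
  ext a
  exact le_antisymm (by simpa using hle (-a)) (hle a)

theorem stmt_17_general {G : Type*} [AddCommGroup G] [Module ℚ G]
    (Gpos : Set G)
    (u : G)
    (τ : G →+ ℝ) (hτu : τ u = 1)
    (hτfaithful : ∀ y ∈ Gpos, y ≠ 0 → 0 < τ y)
    (x : G) (hτx : τ x = 0) :
    ∃ P : Set G,
      (∀ a ∈ P, ∀ b ∈ P, a + b ∈ P) ∧
      (∀ a : G, a ∈ P → -a ∈ P → a = 0) ∧
      (∀ a : G, a ∈ P ∨ -a ∈ P) ∧
      Gpos ⊆ P ∧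
      x ∈ P ∧
      (u ∈ P ∧ ∀ y : G, ∃ n : ℕ, n • u - y ∈ P) ∧
      (∀ a ∈ P, 0 ≤ τ a) ∧
      (∀ ρ : G →+ ℝ, ρ u = 1 → (∀ a ∈ P, 0 ≤ ρ a) → ρ = τ) := by
  obtain ⟨C, hC, hxC⟩ := Module.Free.exists_addGroupCone_hasMemOrNegMem_mem ℚ x
  let P := AddGroupCone.lex τ C
  have hGpos : Gpos ⊆ P := fun y hy => by
    by_cases h : y = 0
    · exact h ▸ zero_mem P
    · exact AddGroupCone.mem_lex_of_pos (hτfaithful y hy h)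
  have hunit (y : G) : ∃ n : ℕ, n • u - y ∈ P := by
    obtain ⟨n, hn⟩ := exists_nat_gt (τ y)
    refine ⟨n, AddGroupCone.mem_lex_of_pos ?_⟩
    rwa [map_sub, map_nsmul, hτu, nsmul_one, sub_pos]
  refine ⟨P, fun a ha b hb => add_mem ha hb, fun a => eq_zero_of_mem_of_neg_mem,
    mem_or_neg_mem P, hGpos, .inr ⟨hτx, hxC⟩,
    ⟨AddGroupCone.mem_lex_of_pos (hτu ▸ one_pos), hunit⟩,
    fun a => AddGroupCone.nonneg_of_mem_lex, fun ρ hρu hρ => ?_⟩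
  exact AddMonoidHom.eq_of_forall_pos_imp_nonneg hρu hτu fun a ha =>
    hρ a (AddGroupCone.mem_lex_of_pos ha)

/-- ordered-group core of Proposition 4.3: a total refinement of the
order making a prescribed nonzero element of the kernel of a faithful state strictly
positive, with τ the unique state. -/
theorem stmt_17 {G : Type*} [AddCommGroup G] [Module ℚ G] [Countable G]
    (Gpos : Set G)
    (hzero : (0 : G) ∈ Gpos)
    (hadd : ∀ a ∈ Gpos, ∀ b ∈ Gpos, a + b ∈ Gpos)
    (hpointed : ∀ a : G, a ∈ Gpos → -a ∈ Gpos → a = 0)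
    (u : G) (hu : u ∈ Gpos)
    (hunit : ∀ y : G, ∃ n : ℕ, n • u - y ∈ Gpos)
    (τ : G →+ ℝ) (hτu : τ u = 1)
    (hτpos : ∀ y ∈ Gpos, 0 ≤ τ y)
    (hτfaithful : ∀ y ∈ Gpos, y ≠ 0 → 0 < τ y)
    (x : G) (hx : x ≠ 0) (hτx : τ x = 0) :
    ∃ P : Set G,
      (∀ a ∈ P, ∀ b ∈ P, a + b ∈ P) ∧
      (∀ a : G, a ∈ P → -a ∈ P → a = 0) ∧
      (∀ a : G, a ∈ P ∨ -a ∈ P) ∧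
      Gpos ⊆ P ∧
      x ∈ P ∧
      (u ∈ P ∧ ∀ y : G, ∃ n : ℕ, n • u - y ∈ P) ∧
      (∀ a ∈ P, 0 ≤ τ a) ∧
      (∀ ρ : G →+ ℝ, ρ u = 1 → (∀ a ∈ P, 0 ≤ ρ a) → ρ = τ) :=
  stmt_17_general Gpos u τ hτu hτfaithful x hτx
end
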